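/- If the variational distance d_v(P,Q) = Σ_x |P(x) - Q(x)| between two probability distributions P and Q on a finite alphabet X satisfies d_v(P,Q) < 1/2, then the difference of their Shannon entropies satisfies |H(P) - H(Q)| ≤ -d_v(P,Q) · log(d_v(P,Q)/|X|). -/

import Mathlib

/-!
Write `η t = -t log t`. Concavity of `η` gives `η q ≤ η (q + d) + η (1 - d)` and subadditivity
gives `η (q + d) ≤ η q + η d`; since `η (1 - d) ≤ η d` for `d ≤ 1/2`, every letter satisfies
`|η (P x) - η (Q x)| ≤ η |P x - Q x|`. Jensen's inequality for `η` then bounds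
`∑ x, η |P x - Q x|` by `-d_v log (d_v / |X|)`.
-/

open Finset

/-- Shannon entropy (base 2) of a distribution on a finite alphabet. -/
noncomputable def ent {X : Type*} [Fintype X] (P : X → ℝ) : ℝ :=
  -∑ x, P x * Real.logb 2 (P x)

/-- Variational (ℓ1) distance between two distributions. -/
noncomputable def dv {X : Type*} [Fintype X] (P Q : X → ℝ) : ℝ :=
  ∑ x, |P x - Q x|

open Real

lemma ConcaveOn.add_le_add_of_add_eq {s : Set ℝ} {f : ℝ → ℝ} (hf : ConcaveOn ℝ s f)
    {a b x y : ℝ} (ha : a ∈ s) (hb : b ∈ s) (hax : a ≤ x) (hxb : x ≤ b) (hxy : x + y = a + b) :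
    f a + f b ≤ f x + f y := by
  rcases hax.trans hxb |>.eq_or_lt with rfl | hab
  · obtain rfl : x = a := le_antisymm hxb hax
    obtain rfl : y = x := by linarith
    rfl
  -- `x` and `y` are convex combinations of `a` and `b` with the same two weights, swapped
  have hba : 0 < b - a := sub_pos.2 hab
  have hl : 0 ≤ (b - x) / (b - a) := div_nonneg (by linarith) hba.le
  have hm : 0 ≤ (x - a) / (b - a) := div_nonneg (by linarith) hba.le
  have hlm : (b - x) / (b - a) + (x - a) / (b - a) = 1 := by field_simp; ring
  have hx := hf.2 ha hb hl hm hlm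
  have hy := hf.2 ha hb hm hl (by rw [add_comm, hlm])
  have ex : (b - x) / (b - a) * a + (x - a) / (b - a) * b = x := by field_simp; ring
  have ey : (x - a) / (b - a) * a + (b - x) / (b - a) * b = y := by
    rw [show y = a + b - x by linarith]; field_simp; ring
  simp only [smul_eq_mul, ex, ey] at hx hy
  have key : ((b - x) / (b - a) + (x - a) / (b - a)) * (f a + f b) ≤ f x + f y := by linarith
  rwa [hlm, one_mul] at key

lemma ConcaveOn.sum_map_le_card_mul_map_avg {ι : Type*} {s : Set ℝ} {f : ℝ → ℝ}
    (hf : ConcaveOn ℝ s f) {t : Finset ι} {a : ι → ℝ} (ha : ∀ i ∈ t, a i ∈ s) :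
    ∑ i ∈ t, f (a i) ≤ #t * f ((∑ i ∈ t, a i) / #t) := by
  rcases t.eq_empty_or_nonempty with rfl | ht
  · simp
  have hn : (0 : ℝ) < #t := by exact_mod_cast ht.card_pos
  have J := hf.le_map_sum (w := fun _ => (#t : ℝ)⁻¹) (fun _ _ => by positivity)
    (by simp [hn.ne']) ha
  simp only [smul_eq_mul, inv_mul_eq_div, ← sum_div] at J
  rwa [div_le_iff₀' hn] at J

namespace Real

lemma negMulLog_add_le {x y : ℝ} (hx : 0 ≤ x) (hy : 0 ≤ y) :
    negMulLog (x + y) ≤ negMulLog x + negMulLog y := by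
  have mul_log_le {a b : ℝ} (ha : 0 ≤ a) (hab : a ≤ b) : a * log a ≤ a * log b := by
    rcases ha.eq_or_lt with rfl | ha
    · simp
    · exact mul_le_mul_of_nonneg_left (log_le_log ha hab) ha.le
  have hx' := mul_log_le hx (le_add_of_nonneg_right hy)
  have hy' := mul_log_le hy (le_add_of_nonneg_left hx)
  simp only [negMulLog]
  linarith

lemma negMulLog_one_sub_le {d : ℝ} (hd0 : 0 ≤ d) (hd : d ≤ 1 / 2) :
    negMulLog (1 - d) ≤ negMulLog d := by
  rcases hd0.eq_or_lt with rfl | hd0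
  · simp
  have he : 0 < 1 - d := by linarith
  -- the goal is `(1 - 2d) (-log (1 - d)) ≤ d (log (1 - d) - log d)`; both sides are compared
  -- with `d (1 - 2d) / (1 - d)`
  have h1 : d * (1 - 2 * d) / (1 - d) ≤ d * (log (1 - d) - log d) := by
    have := one_sub_inv_le_log_of_pos (div_pos he hd0)
    rw [log_div he.ne' hd0.ne', inv_div] at this
    calc d * (1 - 2 * d) / (1 - d) = d * (1 - d / (1 - d)) := by field_simp; ring
      _ ≤ _ := mul_le_mul_of_nonneg_left this hd0.le
  have h2 : (1 - 2 * d) * -log (1 - d) ≤ d * (1 - 2 * d) / (1 - d) := by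
    have := log_le_sub_one_of_pos (inv_pos.2 he)
    rw [log_inv] at this
    calc (1 - 2 * d) * -log (1 - d) ≤ (1 - 2 * d) * ((1 - d)⁻¹ - 1) :=
          mul_le_mul_of_nonneg_left this (by linarith)
      _ = d * (1 - 2 * d) / (1 - d) := by field_simp; ring
  simp only [negMulLog]
  linarith

lemma abs_negMulLog_sub_le {p q : ℝ} (hp0 : 0 ≤ p) (hp1 : p ≤ 1) (hq0 : 0 ≤ q) (hq1 : q ≤ 1)
    (hpq : |p - q| ≤ 1 / 2) : |negMulLog p - negMulLog q| ≤ negMulLog |p - q| := by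
  wlog hqp : q ≤ p generalizing p q
  · simpa only [abs_sub_comm] using this hq0 hq1 hp0 hp1 (by rwa [abs_sub_comm]) (by linarith)
  obtain ⟨d, hd, rfl⟩ : ∃ d, 0 ≤ d ∧ p = q + d := ⟨p - q, sub_nonneg.2 hqp, by ring⟩
  rw [add_sub_cancel_left, abs_of_nonneg hd] at hpq ⊢
  have hconc : negMulLog q ≤ negMulLog (q + d) + negMulLog (1 - d) := by
    simpa using concaveOn_negMulLog.add_le_add_of_add_eq (Set.mem_Ici.2 hq0)
      (Set.mem_Ici.2 zero_le_one) (le_add_of_nonneg_right hd) hp1 (by ring)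
  rw [abs_le]
  constructor
  · linarith [negMulLog_one_sub_le hd hpq]
  · linarith [negMulLog_add_le hq0 hd]

end Real

lemma ent_eq_sum_negMulLog_div_log_two {X : Type*} [Fintype X] (P : X → ℝ) :
    ent P = (∑ x, negMulLog (P x)) / log 2 := by
  simp only [ent, logb, negMulLog, neg_mul, sum_neg_distrib, sum_div, neg_div, mul_div_assoc]

lemma neg_mul_logb_two_div_eq (s n : ℝ) : -s * logb 2 (s / n) = n * negMulLog (s / n) / log 2 := by
  rcases eq_or_ne n 0 with rfl | hn
  · simp
  · rw [negMulLog, logb]; field_simp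

theorem stmt0 {X : Type*} [Fintype X]
    (P Q : X → ℝ)
    (hP0 : ∀ x, 0 ≤ P x) (hP1 : ∑ x, P x = 1)
    (hQ0 : ∀ x, 0 ≤ Q x) (hQ1 : ∑ x, Q x = 1)
    (h : dv P Q < 1 / 2) :
    |ent P - ent Q| ≤ -(dv P Q) * Real.logb 2 (dv P Q / (Fintype.card X : ℝ)) := by
  have hP_le : ∀ x, P x ≤ 1 := fun x => hP1 ▸ single_le_sum (fun i _ => hP0 i) (mem_univ x)
  have hQ_le : ∀ x, Q x ≤ 1 := fun x => hQ1 ▸ single_le_sum (fun i _ => hQ0 i) (mem_univ x)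
  have hclose : ∀ x, |P x - Q x| ≤ 1 / 2 := fun x =>
    ((single_le_sum (fun i _ => abs_nonneg (P i - Q i)) (mem_univ x)).trans_lt h).le
  rw [ent_eq_sum_negMulLog_div_log_two, ent_eq_sum_negMulLog_div_log_two, neg_mul_logb_two_div_eq,
    ← sub_div, abs_div, abs_of_pos (log_pos one_lt_two)]
  gcongr
  calc |∑ x, negMulLog (P x) - ∑ x, negMulLog (Q x)|
      ≤ ∑ x, |negMulLog (P x) - negMulLog (Q x)| := by
        rw [← sum_sub_distrib]; exact abs_sum_le_sum_abs _ _
    _ ≤ ∑ x, negMulLog |P x - Q x| := sum_le_sum fun x _ =>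
        abs_negMulLog_sub_le (hP0 x) (hP_le x) (hQ0 x) (hQ_le x) (hclose x)
    _ ≤ Fintype.card X * negMulLog (dv P Q / Fintype.card X) := by
        simpa only [card_univ, dv] using concaveOn_negMulLog.sum_map_le_card_mul_map_avg
          (t := univ) fun x _ => Set.mem_Ici.2 (abs_nonneg (P x - Q x))
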